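/- arXiv:1112.0991 — 7 statements merged into one kernel-verified Lean document; each statement's English description precedes it below -/
import Mathlib

section
/- Let B be a binomial ring and n ∈ ℕ. The map φ : B → B given by φ(x) = Ring.choose x n is numerical of degree ≤ n, i.e. (i) for all x : Fin (n+1) → B, ∑_{S ⊆ Fin (n+1)} (−1)^{n+1−|S|} · Ring.choose (∑_{i∈S} x i) n = 0, and (ii) for all r, x ∈ B, Ring.choose (r·x) n = ∑_{k=0}^{n} Ring.choose r k · (∑_{j=0}^{k} (−1)^{k−j} · binom(k,j) · Ring.choose (j·x) n). -/
/-!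
Write `Δ_h f = f (· + h) - f`. The alternating sum over the subsets of `T` in (i) is the iterated
difference `Δ_{x a₁} ⋯ Δ_{x aₜ} φ` at `0`, and by Vandermonde's identity every difference operator
lowers the degree of `y ↦ choose y m`, so more than `m` of them annihilate it.

For (ii), binomial rings are torsion-free, so it suffices to prove the identity multiplied by
`(n!)²`; it then becomes an identity between Pochhammer polynomials in `r` and `x` with integer
coefficients. For `r` a natural number this is the Gregory–Newton formula, truncated because
differences of order `> n` of a polynomial of degree `n` vanish. An identity in `ℤ[x][r]` that
holds at every natural `r` holds identically, hence in every commutative ring.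
-/

/-- The deviation Δ_k φ x. -/
def delta {M N : Type*} [AddCommMonoid M] [AddCommGroup N]
    (φ : M → N) (k : ℕ) (x : M) : N :=
  ∑ j ∈ Finset.range (k + 1), ((-1 : ℤ) ^ (k - j) * (k.choose j : ℤ)) • φ (j • x)

/-- Numerical map of degree ≤ n. -/
def IsNumerical (B : Type*) {M N : Type*} [CommRing B] [BinomialRing B]
    [AddCommMonoid M] [Module B M] [AddCommGroup N] [Module B N]
    (φ : M → N) (n : ℕ) : Prop :=
  (∀ x : Fin (n + 1) → M,
      ∑ S : Finset (Fin (n + 1)), ((-1 : ℤ) ^ (n + 1 - S.card)) • φ (∑ i ∈ S, x i) = 0) ∧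
  ∀ (r : B) (x : M), φ (r • x) = ∑ k ∈ Finset.range (n + 1), Ring.choose r k • delta φ k x

open Finset Polynomial

def crossEffect {ι M N : Type*} [AddCommMonoid M] [AddCommGroup N]
    (f : M → N) (T : Finset ι) (x : ι → M) : N :=
  ∑ S ∈ T.powerset, (-1 : ℤ) ^ (T.card - S.card) • f (∑ i ∈ S, x i)

section CrossEffect

variable {ι M N : Type*} [AddCommMonoid M] [AddCommGroup N]

lemma crossEffect_insert [DecidableEq ι] (f : M → N) {T : Finset ι} {a : ι} (ha : a ∉ T)
    (x : ι → M) : crossEffect f (insert a T) x = crossEffect (fwdDiff (x a) f) T x := by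
  rw [crossEffect, sum_powerset_insert ha, crossEffect, ← sum_add_distrib]
  refine sum_congr rfl fun S hS => ?_
  have hST : S.card ≤ T.card := card_le_card (mem_powerset.1 hS)
  have haS : a ∉ S := fun h => ha (mem_powerset.1 hS h)
  rw [card_insert_of_notMem ha, card_insert_of_notMem haS, sum_insert haS, add_comm (x a),
    Nat.add_sub_add_right, show T.card + 1 - S.card = T.card - S.card + 1 by omega, pow_succ,
    fwdDiff, smul_sub]
  simp only [mul_neg, mul_one, neg_smul]
  abel

lemma crossEffect_sum_mul {R : Type*} [CommRing R] {α : Type*} (s : Finset α) (c : α → R)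
    (g : α → M → R) (T : Finset ι) (x : ι → M) :
    crossEffect (fun y => ∑ j ∈ s, c j * g j y) T x = ∑ j ∈ s, c j * crossEffect (g j) T x := by
  simp only [crossEffect, mul_sum, smul_sum, mul_smul_comm]
  exact sum_comm

end CrossEffect

section Newton

variable {M G : Type*} [AddCommMonoid M] [AddCommGroup G]

lemma delta_eq_fwdDiff_iter (f : M → G) (k : ℕ) (x : M) : delta f k x = (fwdDiff x)^[k] f 0 := by
  simp [delta, fwdDiff_iter_eq_sum_shift]

theorem apply_nsmul_eq_sum_range_fwdDiff_iter (f : M → G) (h : M) {n : ℕ}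
    (hf : ∀ k, n < k → (fwdDiff h)^[k] f 0 = 0) (m : ℕ) :
    f (m • h) = ∑ k ∈ range (n + 1), m.choose k • (fwdDiff h)^[k] f 0 := by
  have hm : f (m • h) = ∑ k ∈ range (m + n + 1), m.choose k • (fwdDiff h)^[k] f 0 := by
    rw [← zero_add (m • h), shift_eq_sum_fwdDiff_iter h f m 0]
    refine sum_subset (range_subset_range.2 (by omega)) fun k _ hk => ?_
    rw [Nat.choose_eq_zero_of_lt (by simpa using hk), zero_smul]
  rw [hm]
  refine (sum_subset (range_subset_range.2 (by omega)) fun k _ hk => ?_).symm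
  rw [hf k (by simpa using hk), smul_zero]

end Newton

section Pochhammer

variable {R S : Type*} [CommRing R] [CommRing S]

lemma Polynomial.fwdDiff_iter_eval_eq_zero_of_natDegree_lt {P : R[X]} {k : ℕ}
    (hP : P.natDegree < k) (h y : R) : (fwdDiff h)^[k] P.eval y = 0 := by
  set Q := P.comp (C h * X + C y)
  have hQ : Q.natDegree < k := calc
    Q.natDegree ≤ P.natDegree * (C h * X + C y).natDegree := natDegree_comp_le
    _ ≤ P.natDegree := mul_le_of_le_one_right (Nat.zero_le _) natDegree_linear_le
    _ < k := hP
  have hshift : (fwdDiff h)^[k] P.eval y = (fwdDiff 1)^[k] Q.eval 0 := by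
    simp only [fwdDiff_iter_eq_sum_shift, Q, eval_comp, eval_add, eval_mul, eval_C, eval_X]
    refine sum_congr rfl fun j _ => ?_
    congr 2
    simp only [nsmul_eq_mul]
    ring
  rw [hshift, fwdDiff_iter_eq_zero_of_degree_lt hQ, Pi.zero_apply]

lemma Polynomial.map_fwdDiff_iter_eval (f : R →+* S) (P : R[X]) (h y : R) (k : ℕ) :
    f ((fwdDiff h)^[k] P.eval y) = (fwdDiff (f h))^[k] (P.map f).eval (f y) := by
  simp [fwdDiff_iter_eq_sum_shift, eval_map, ← eval₂_at_apply]

lemma map_descPochhammer_eval (f : R →+* S) (n : ℕ) (r : R) :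
    f ((descPochhammer R n).eval r) = (descPochhammer S n).eval (f r) := by
  rw [← descPochhammer_map f, eval_map, eval₂_at_apply]

lemma map_fwdDiff_iter_descPochhammer_eval (f : R →+* S) (n k : ℕ) (h y : R) :
    f ((fwdDiff h)^[k] (descPochhammer R n).eval y) =
      (fwdDiff (f h))^[k] (descPochhammer S n).eval (f y) := by
  rw [map_fwdDiff_iter_eval, descPochhammer_map]

theorem factorial_smul_descPochhammer_eval_natCast_mul (n m : ℕ) (x : R) :
    n.factorial • (descPochhammer R n).eval (m * x) = ∑ k ∈ range (n + 1),
      (n.factorial / k.factorial) •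
        ((descPochhammer R k).eval (m : R) * (fwdDiff x)^[k] (descPochhammer R n).eval 0) := by
  have hvanish : ∀ k, n < k → (fwdDiff x)^[k] (descPochhammer R n).eval 0 = 0 := fun k hk =>
    fwdDiff_iter_eval_eq_zero_of_natDegree_lt
      ((descPochhammer_map (Int.castRingHom R) n ▸ natDegree_map_le.trans_eq
        (descPochhammer_natDegree (R := ℤ) n)).trans_lt hk) x 0
  rw [← nsmul_eq_mul, apply_nsmul_eq_sum_range_fwdDiff_iter _ x hvanish, smul_sum]
  refine sum_congr rfl fun k hk => ?_
  rw [descPochhammer_eval_eq_descFactorial, Nat.descFactorial_eq_factorial_mul_choose,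
    Nat.cast_mul, mul_assoc, ← nsmul_eq_mul, ← nsmul_eq_mul, smul_smul, smul_smul,
    Nat.div_mul_cancel (Nat.factorial_dvd_factorial (Nat.lt_succ_iff.1 (mem_range.1 hk))),
    mul_smul]

theorem factorial_smul_descPochhammer_eval_mul (n : ℕ) (r x : R) :
    n.factorial • (descPochhammer R n).eval (r * x) = ∑ k ∈ range (n + 1),
      (n.factorial / k.factorial) •
        ((descPochhammer R k).eval r * (fwdDiff x)^[k] (descPochhammer R n).eval 0) := by
  have huniv : n.factorial • (descPochhammer ℤ[X][X] n).eval (X * C X) = ∑ k ∈ range (n + 1),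
      (n.factorial / k.factorial) • ((descPochhammer ℤ[X][X] k).eval X *
        (fwdDiff (C X))^[k] (descPochhammer ℤ[X][X] n).eval 0) := by
    rw [← sub_eq_zero]
    refine eq_zero_of_infinite_isRoot _ <|
      Set.infinite_of_injective_forall_mem Nat.cast_injective fun m : ℕ => ?_
    rw [Set.mem_ofPred_eq, IsRoot, ← coe_evalRingHom, map_sub, sub_eq_zero]
    simp only [map_nsmul, map_sum, map_mul, map_descPochhammer_eval,
      map_fwdDiff_iter_descPochhammer_eval, coe_evalRingHom, eval_X, eval_C, eval_zero]
    exact factorial_smul_descPochhammer_eval_natCast_mul n m X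
  simpa only [map_nsmul, map_sum, map_mul, map_descPochhammer_eval,
    map_fwdDiff_iter_descPochhammer_eval, coe_eval₂RingHom, eval₂_X, eval₂_C, eval₂_zero]
    using congrArg (eval₂RingHom (eval₂RingHom (Int.castRingHom R) x) r) huniv

end Pochhammer

section BinomialRing

variable {B : Type*} [CommRing B] [BinomialRing B]

lemma Ring.fwdDiff_choose_succ (h : B) (m : ℕ) :
    fwdDiff h (fun y => Ring.choose y (m + 1)) =
      fun y => ∑ j ∈ range (m + 1), Ring.choose h (j + 1) * Ring.choose y (m - j) := by
  ext y
  rw [fwdDiff, add_comm y h, Ring.add_choose_eq _ (Commute.all h y),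
    Nat.sum_antidiagonal_eq_sum_range_succ (fun i j => Ring.choose h i * Ring.choose y j),
    sum_range_succ']
  simp

theorem crossEffect_choose_eq_zero {ι : Type*} (T : Finset ι) (x : ι → B) {m : ℕ}
    (hm : m < T.card) : crossEffect (fun y => Ring.choose y m) T x = 0 := by
  classical
  induction T using Finset.induction_on generalizing m with
  | empty => simp at hm
  | insert a T ha ih =>
    rw [card_insert_of_notMem ha] at hm
    rw [crossEffect_insert _ ha]
    cases m with
    | zero => simp [crossEffect]
    | succ m =>
      rw [Ring.fwdDiff_choose_succ, crossEffect_sum_mul]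
      exact sum_eq_zero fun j hj => by rw [ih (by have := mem_range.1 hj; omega), mul_zero]

lemma Ring.descPochhammer_eval_eq_factorial_mul_choose (r : B) (n : ℕ) :
    (descPochhammer B n).eval r = n.factorial * Ring.choose r n := by
  rw [← nsmul_eq_mul, ← Ring.descPochhammer_eq_factorial_smul_choose, ← aeval_eq_smeval,
    aeval_def, eval₂_eq_eval_map, descPochhammer_map]

theorem Ring.choose_mul_eq_sum_choose_mul_fwdDiff_iter (n : ℕ) (r x : B) :
    Ring.choose (r * x) n = ∑ k ∈ range (n + 1),
      Ring.choose r k * (fwdDiff x)^[k] (fun y => Ring.choose y n) 0 := by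
  have := BinomialRing.toIsAddTorsionFree (R := B)
  refine nsmul_right_injective (Nat.mul_ne_zero n.factorial_ne_zero n.factorial_ne_zero) ?_
  have hchoose :
      (fun y => (descPochhammer B n).eval y) = n.factorial • fun y => Ring.choose y n := by
    ext y
    rw [Pi.smul_apply, descPochhammer_eval_eq_factorial_mul_choose, nsmul_eq_mul]
  dsimp only
  rw [mul_smul, nsmul_eq_mul n.factorial (Ring.choose _ n),
    ← descPochhammer_eval_eq_factorial_mul_choose, factorial_smul_descPochhammer_eval_mul, smul_sum]
  refine sum_congr rfl fun k hk => ?_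
  rw [hchoose, fwdDiff_iter_const_smul, descPochhammer_eval_eq_factorial_mul_choose,
    Pi.smul_apply, ← nsmul_eq_mul, smul_mul_smul_comm, smul_smul, ← mul_assoc,
    Nat.div_mul_cancel (Nat.factorial_dvd_factorial (Nat.lt_succ_iff.1 (mem_range.1 hk))),
    mul_smul]

end BinomialRing

/-- **The binomial coefficient `x ↦ (x choose n)` is numerical of degree ≤ n.** -/
theorem choose_isNumerical {B : Type*} [CommRing B] [BinomialRing B] (n : ℕ) :
    IsNumerical B (fun x : B => Ring.choose x n) n := by
  refine ⟨fun x => ?_, fun r x => ?_⟩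
  · simpa [crossEffect] using crossEffect_choose_eq_zero univ x (by simp)
  · simp only [smul_eq_mul, Ring.choose_mul_eq_sum_choose_mul_fwdDiff_iter, delta_eq_fwdDiff_iter]
end

section
/- Let B be a binomial ring, r ∈ B, and m ≤ n natural numbers. Then ∑_{k=m}^{n} (−1)^k · Ring.choose r k · binom(k,m) = (−1)^n · Ring.choose r m · Ring.choose (r − m − 1) (n − m), where binom(k,m) denotes the ordinary natural-number binomial coefficient cast into B and r − m − 1 means r − (m : B) − 1. -/
/-!
Trinomial revision `(k choose m) (r choose k) = (r choose m) ((r - m) choose (k - m))` pulls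
`(r choose m)` out of the sum, leaving an alternating partial sum of the binomial coefficients
of `r - m`; by Pascal's rule such a sum telescopes:
`∑_{j ≤ N} (-1)^j (s choose j) = (-1)^N ((s - 1) choose N)`.
-/

open Finset

theorem Ring.alternating_sum_range_choose {B : Type*} [CommRing B] [BinomialRing B]
    (s : B) (N : ℕ) :
    ∑ j ∈ range (N + 1), (-1 : B) ^ j * Ring.choose s j = (-1) ^ N * Ring.choose (s - 1) N := by
  induction N with
  | zero => simp
  | succ N ih =>
    have pascal := Ring.choose_succ_succ (s - 1) N
    rw [sub_add_cancel] at pascal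
    rw [sum_range_succ, ih, pascal, pow_succ]
    ring

theorem Ring.natChoose_mul_choose_add {B : Type*} [CommRing B] [BinomialRing B]
    (r : B) (m j : ℕ) :
    ((m + j).choose m : B) * Ring.choose r (m + j) = Ring.choose r m * Ring.choose (r - m) j := by
  rw [← nsmul_eq_mul, Ring.choose_smul_choose r (Nat.le_add_right m j), Nat.add_sub_cancel_left]

/-- **A binomial identity in binomial rings:** for `m ≤ n`,
`∑_{k=m}^{n} (-1)^k (r choose k) (k choose m) = (-1)^n (r choose m) ((r-m-1) choose (n-m))`. -/
theorem binomial_sum_formula {B : Type*} [CommRing B] [BinomialRing B]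
    (r : B) (m n : ℕ) (hmn : m ≤ n) :
    ∑ k ∈ Finset.Icc m n, (-1 : B) ^ k * Ring.choose r k * (k.choose m : B) =
      (-1 : B) ^ n * Ring.choose r m * Ring.choose (r - (m : B) - 1) (n - m) := by
  have hlen : n + 1 - m = n - m + 1 := by omega
  calc ∑ k ∈ Icc m n, (-1 : B) ^ k * Ring.choose r k * (k.choose m : B)
      = ∑ j ∈ range (n - m + 1),
          (-1 : B) ^ (m + j) * Ring.choose r (m + j) * ((m + j).choose m : B) := by
        rw [← Ico_add_one_right_eq_Icc, sum_Ico_eq_sum_range, hlen]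
    _ = (-1) ^ m * Ring.choose r m *
          ∑ j ∈ range (n - m + 1), (-1 : B) ^ j * Ring.choose (r - m) j := by
        rw [mul_sum]
        refine sum_congr rfl fun j _ => ?_
        rw [mul_assoc, mul_comm (Ring.choose r _), Ring.natChoose_mul_choose_add, pow_add]
        ring
    _ = (-1 : B) ^ n * Ring.choose r m * Ring.choose (r - (m : B) - 1) (n - m) := by
        rw [Ring.alternating_sum_range_choose, ← Nat.add_sub_cancel' hmn, pow_add,
          Nat.add_sub_cancel_left]
        ring
end

section
/- Let B be a binomial ring, M, N B-modules, and let φ : M → N be a map whose deviation in n+1 variables vanishes (condition (i)). Then φ is numerical of degree ≤ n if and only if for all r ∈ B and x ∈ M: φ(r • x) = ∑_{m=0}^{n} (−1)^{n−m} · (Ring.choose r m · Ring.choose (r − m − 1) (n − m)) • φ(m • x), where r − m − 1 means r − (m : B) − 1. -/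
/-!
Expanding each `Δ_k φ x` and exchanging the two summations writes
`∑_{k ≤ n} (r choose k) • Δ_k φ x` as `∑_{m ≤ n} c_m • φ (m • x)` with
`c_m = ∑_{k=m}^{n} (-1)^(k-m) (k choose m) (r choose k)`. The identity
`(k choose m) (r choose k) = (r choose m) ((r - m) choose (k - m))` and the alternating partial sum
`∑_{i ≤ t} (-1)^i (s choose i) = (-1)^t ((s - 1) choose t)` collapse `c_m` to the coefficient of
the statement, so condition (ii) of numericality is exactly the displayed formula.
-/

open Finset

namespace Ring

variable {R : Type*} [CommRing R] [BinomialRing R]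

theorem sum_range_neg_one_pow_mul_choose (s : R) (t : ℕ) :
    ∑ i ∈ range (t + 1), (-1 : R) ^ i * choose s i = (-1) ^ t * choose (s - 1) t := by
  induction t with
  | zero => simp
  | succ t ih =>
    rw [sum_range_succ, ih]
    nth_rw 2 [← sub_add_cancel s 1]
    rw [choose_succ_succ]
    ring

theorem sum_range_neg_one_pow_mul_choose_add (r : R) (m t : ℕ) :
    ∑ i ∈ range (t + 1), (-1 : R) ^ i * ((m + i).choose m * choose r (m + i)) =
      (-1) ^ t * (choose r m * choose (r - m - 1) t) := by
  have hterm (i : ℕ) :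
      ((m + i).choose m : R) * choose r (m + i) = choose r m * choose (r - m) i := by
    rw [← nsmul_eq_mul, choose_smul_choose r (Nat.le_add_right m i), Nat.add_sub_cancel_left]
  simp only [hterm, mul_left_comm _ (choose r m), ← mul_sum, sum_range_neg_one_pow_mul_choose]

end Ring

section

variable {B M N : Type*} [CommRing B] [BinomialRing B] [AddCommMonoid M] [AddCommGroup N]
  [Module B N]

theorem sum_choose_smul_delta (φ : M → N) (n : ℕ) (r : B) (x : M) :
    ∑ k ∈ range (n + 1), Ring.choose r k • delta φ k x =
      ∑ m ∈ range (n + 1),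
        ((-1 : B) ^ (n - m) * (Ring.choose r m * Ring.choose (r - (m : B) - 1) (n - m))) •
          φ (m • x) := by
  -- the summand is written as a function of `j` and `k - j` so that `sum_range_diag_flip` applies
  calc ∑ k ∈ range (n + 1), Ring.choose r k • delta φ k x
      = ∑ k ∈ range (n + 1), ∑ j ∈ range (k + 1),
          ((-1 : B) ^ (k - j) * ((j + (k - j)).choose j * Ring.choose r (j + (k - j)))) •
            φ (j • x) := by
        refine sum_congr rfl fun k _ => ?_
        rw [delta, smul_sum]
        refine sum_congr rfl fun j hj => ?_
        rw [Nat.add_sub_cancel' (Nat.lt_succ_iff.mp (mem_range.mp hj)),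
          ← Int.cast_smul_eq_zsmul B, smul_smul]
        push_cast
        congr 1
        ring
    _ = ∑ m ∈ range (n + 1), ∑ i ∈ range (n + 1 - m),
          ((-1 : B) ^ i * ((m + i).choose m * Ring.choose r (m + i))) • φ (m • x) :=
        sum_range_diag_flip (n + 1) fun m i =>
          ((-1 : B) ^ i * ((m + i).choose m * Ring.choose r (m + i))) • φ (m • x)
    _ = _ := by
        refine sum_congr rfl fun m hm => ?_
        rw [← sum_smul, Nat.sub_add_comm (Nat.lt_succ_iff.mp (mem_range.mp hm)),
          Ring.sum_range_neg_one_pow_mul_choose_add]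

end

/-- **Alternative characterisation of numericality.** A map which is polynomial of
degree ≤ n (vanishing (n+1)-variable deviation) is numerical of degree ≤ n if and
only if `φ(r • x) = ∑_{m=0}^{n} (-1)^{n-m} (r choose m)((r-m-1) choose (n-m)) • φ(m • x)`. -/
theorem isNumerical_iff_of_deviation_vanishes {B M N : Type*} [CommRing B] [BinomialRing B]
    [AddCommGroup M] [Module B M] [AddCommGroup N] [Module B N]
    (n : ℕ) (φ : M → N)
    (hdev : ∀ x : Fin (n + 1) → M,
      ∑ S : Finset (Fin (n + 1)), ((-1 : ℤ) ^ (n + 1 - S.card)) • φ (∑ i ∈ S, x i) = 0) :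
    IsNumerical B φ n ↔
      ∀ (r : B) (x : M),
        φ (r • x) = ∑ m ∈ Finset.range (n + 1),
          ((-1 : B) ^ (n - m) * (Ring.choose r m * Ring.choose (r - (m : B) - 1) (n - m))) •
            φ (m • x) := by
  rw [IsNumerical, and_iff_right hdev]
  simp only [sum_choose_smul_delta]
end

section
/- Let B be a binomial ring, N a B-module, k, n ∈ ℕ, and let v : (Fin k → ℕ) → N be a family with v q = 0 whenever |q| > n. If ∑_{q : Fin k → ℕ, |q| ≤ n} (∏_i Ring.choose (a i) (q i)) • v q = 0 for every a : Fin k → B, then v q = 0 for all q. (Uniqueness of coefficients in binomial expansions.) -/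
/-!
Evaluate the expansion at the natural-number point `a = q`. Since `Ring.choose (q i : B) (p i)`
is the cast of `Nat.choose (q i) (p i)`, the only surviving terms are those with `p ≤ q`, and the
term `p = q` has coefficient `1`. Hence `v q` is a combination of the `v p` with `p < q`, which
vanish by well-founded induction on the product order of `ι → ℕ`.
-/

/-- The finite set of multi-indices `q : Fin k → ℕ` with `|q| ≤ n`. -/
def multiIdx (k n : ℕ) : Finset (Fin k → ℕ) :=
  (Finset.Iic fun _ : Fin k => n).filter fun q => ∑ i, q i ≤ n

section BinomialRing

variable {ι B : Type*} [Fintype ι] [CommRing B] [BinomialRing B]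

theorem prod_choose_natCast_eq_zero_of_not_le {p q : ι → ℕ} (hpq : ¬p ≤ q) :
    ∏ i, Ring.choose (q i : B) (p i) = 0 := by
  obtain ⟨i, hi⟩ : ∃ i, q i < p i := by simpa [Pi.le_def] using hpq
  refine Finset.prod_eq_zero (Finset.mem_univ i) ?_
  rw [Ring.choose_natCast, Nat.choose_eq_zero_of_lt hi, Nat.cast_zero]

theorem prod_choose_natCast_self (q : ι → ℕ) : ∏ i, Ring.choose (q i : B) (q i) = 1 := by
  simp only [Ring.choose_natCast, Nat.choose_self, Nat.cast_one, Finset.prod_const_one]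

variable {N : Type*} [AddCommGroup N] [Module B N]

theorem eq_zero_of_sum_prod_choose_natCast_smul_eq_zero (s : Finset (ι → ℕ)) {v : (ι → ℕ) → N}
    (hv : ∀ q ∉ s, v q = 0)
    (h : ∀ q : ι → ℕ, ∑ p ∈ s, (∏ i, Ring.choose (q i : B) (p i)) • v p = 0) (q : ι → ℕ) :
    v q = 0 := by
  induction q using WellFoundedLT.induction with
  | _ q ih =>
    by_cases hq : q ∈ s
    swap
    · exact hv q hq
    have hterm : ∀ p ∈ s, p ≠ q → (∏ i, Ring.choose (q i : B) (p i)) • v p = 0 := by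
      intro p _ hpq
      by_cases hle : p ≤ q
      · rw [ih p (lt_of_le_of_ne hle hpq), smul_zero]
      · rw [prod_choose_natCast_eq_zero_of_not_le hle, zero_smul]
    simpa only [Finset.sum_eq_single_of_mem q hq hterm, prod_choose_natCast_self, one_smul]
      using h q

end BinomialRing

theorem mem_multiIdx {k n : ℕ} {q : Fin k → ℕ} : q ∈ multiIdx k n ↔ ∑ i, q i ≤ n := by
  refine ⟨fun hq => (Finset.mem_filter.mp hq).2, fun hq => Finset.mem_filter.mpr ⟨?_, hq⟩⟩
  exact Finset.mem_Iic.mpr fun i => (Finset.single_le_sum (fun j _ => Nat.zero_le (q j))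
    (Finset.mem_univ i)).trans hq

/-- **Uniqueness of coefficients in binomial expansions.** If `v q = 0` for `|q| > n`
and `∑_{|q| ≤ n} (∏ᵢ ((a i) choose (q i))) • v q = 0` for every `a : Fin k → B`, then
`v = 0`. -/
theorem binomial_expansion_coeffs_unique {B N : Type*} [CommRing B] [BinomialRing B]
    [AddCommGroup N] [Module B N] (k n : ℕ) (v : (Fin k → ℕ) → N)
    (hv : ∀ q : Fin k → ℕ, n < ∑ i, q i → v q = 0)
    (h : ∀ a : Fin k → B,
      ∑ q ∈ multiIdx k n, (∏ i, Ring.choose (a i) (q i)) • v q = 0) :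
    ∀ q : Fin k → ℕ, v q = 0 :=
  eq_zero_of_sum_prod_choose_natCast_smul_eq_zero (multiIdx k n)
    (fun q hq => hv q (not_le.mp (mem_multiIdx.not.mp hq)))
    (fun q => h fun i => (q i : B))
end

section
/- Let B be a binomial ring and M, N B-modules. A map φ : M → N is numerical of degree ≤ 1 if and only if it is a translated module homomorphism, i.e. there exists a B-linear map ψ : M →ₗ[B] N such that φ(x) = ψ(x) + φ(0) for all x ∈ M. -/
/-!
For `n = 1` the two conditions defining a numerical map say exactly that `x ↦ φ x - φ 0` is
additive (the alternating sum over the subsets of `Fin 2` is `φ (a + b) - φ a - φ b + φ 0`) and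
`B`-homogeneous (only `Δ₀ φ x = φ 0` and `Δ₁ φ x = φ x - φ 0` occur, with coefficients
`choose r 0 = 1` and `choose r 1 = r`), i.e. that it is `B`-linear.
-/

section

variable {M N : Type*} [AddCommMonoid M] [AddCommGroup N]

theorem Finset.sum_univ_finset_fin_two {A : Type*} [AddCommMonoid A] (f : Finset (Fin 2) → A) :
    ∑ S : Finset (Fin 2), f S = f ∅ + f {0} + f {1} + f {0, 1} := by
  have huniv : (Finset.univ : Finset (Finset (Fin 2))) = {∅, {0}, {1}, {0, 1}} := by decide
  rw [huniv, Finset.sum_insert (by decide), Finset.sum_insert (by decide),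
    Finset.sum_insert (by decide), Finset.sum_singleton]
  simp only [add_assoc]

theorem sum_finset_fin_two_alternating (φ : M → N) (x : Fin 2 → M) :
    ∑ S : Finset (Fin 2), ((-1 : ℤ) ^ (2 - S.card)) • φ (∑ i ∈ S, x i) =
      φ (x 0 + x 1) - φ (x 0) - φ (x 1) + φ 0 := by
  rw [Finset.sum_univ_finset_fin_two, Finset.sum_pair (by decide)]
  have hcard : ({0, 1} : Finset (Fin 2)).card = 2 := by decide
  simp only [Finset.sum_empty, Finset.sum_singleton, Finset.card_empty, Finset.card_singleton,
    hcard]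
  norm_num
  abel

@[simp]
theorem delta_zero (φ : M → N) (x : M) : delta φ 0 x = φ 0 := by
  simp [delta]

@[simp]
theorem delta_one (φ : M → N) (x : M) : delta φ 1 x = φ x - φ 0 := by
  simp [delta, Finset.sum_range_succ, sub_eq_neg_add]

theorem sum_range_two_choose_smul_delta {B : Type*} [CommRing B] [BinomialRing B] [Module B N]
    (φ : M → N) (r : B) (x : M) :
    ∑ k ∈ Finset.range 2, Ring.choose r k • delta φ k x = φ 0 + r • (φ x - φ 0) := by
  simp [Finset.sum_range_succ]

theorem exists_linearMap_eq_add_const_iff {B : Type*} [Semiring B] [Module B M] [Module B N]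
    (φ : M → N) :
    (∃ ψ : M →ₗ[B] N, ∀ x, φ x = ψ x + φ 0) ↔
      (∀ a b, φ (a + b) - φ 0 = (φ a - φ 0) + (φ b - φ 0)) ∧
        ∀ (r : B) x, φ (r • x) - φ 0 = r • (φ x - φ 0) := by
  constructor
  · rintro ⟨ψ, hψ⟩
    have hψ' : ∀ x, φ x - φ 0 = ψ x := fun x => sub_eq_of_eq_add (hψ x)
    exact ⟨fun a b => by simp only [hψ', map_add], fun r x => by simp only [hψ', map_smul]⟩
  · rintro ⟨hadd, hsmul⟩
    exact ⟨⟨⟨fun x => φ x - φ 0, hadd⟩, hsmul⟩, fun x => (sub_add_cancel _ _).symm⟩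

theorem isNumerical_one_iff {B : Type*} [CommRing B] [BinomialRing B] [Module B M] [Module B N]
    (φ : M → N) :
    IsNumerical B φ 1 ↔
      (∀ a b, φ (a + b) - φ 0 = (φ a - φ 0) + (φ b - φ 0)) ∧
        ∀ (r : B) x, φ (r • x) - φ 0 = r • (φ x - φ 0) := by
  have hadd : ∀ a b, φ (a + b) - φ 0 = (φ a - φ 0) + (φ b - φ 0) ↔
      φ (a + b) - φ a - φ b + φ 0 = 0 := fun a b => by
    rw [← sub_eq_zero]
    constructor <;> intro h <;> rw [← h] <;> abel
  refine and_congr ⟨fun h a b => ?_, fun h x => ?_⟩ (forall₂_congr fun r x => ?_)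
  · exact (hadd a b).2 ((sum_finset_fin_two_alternating φ ![a, b]).symm.trans (h ![a, b]))
  · exact (sum_finset_fin_two_alternating φ x).trans ((hadd _ _).1 (h (x 0) (x 1)))
  · rw [sub_eq_iff_eq_add', ← sum_range_two_choose_smul_delta φ r x]

end

/-- **A map is numerical of degree ≤ 1 iff it is a translated module homomorphism.** -/
theorem isNumerical_one_iff_translated_hom {B M N : Type*} [CommRing B] [BinomialRing B]
    [AddCommGroup M] [Module B M] [AddCommGroup N] [Module B N] (φ : M → N) :
    IsNumerical B φ 1 ↔ ∃ ψ : M →ₗ[B] N, ∀ x : M, φ x = ψ x + φ 0 :=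
  (isNumerical_one_iff φ).trans (exists_linearMap_eq_add_const_iff φ).symm
end

section
/- A map φ : ℤ → ℤ is numerical of degree ≤ n if and only if there exist integers c_0, …, c_n such that φ(x) = ∑_{k=0}^{n} c_k · Ring.choose x k for all x ∈ ℤ, where Ring.choose x k is the integer binomial coefficient. -/
open Finset fwdDiff fwdDiff_aux

section PolyMap

variable (M G : Type*) [AddCommMonoid M] [AddCommGroup G]

def polyMapDegreeLT : ℕ → Submodule ℤ (M → G)
  | 0 => ⊥
  | n + 1 => ⨅ h : M, (polyMapDegreeLT n).comap (fwdDiffₗ M G h)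

variable {M G}

lemma mem_polyMapDegreeLT_zero {φ : M → G} : φ ∈ polyMapDegreeLT M G 0 ↔ φ = 0 :=
  Submodule.mem_bot ℤ (x := φ)

lemma mem_polyMapDegreeLT_succ {n : ℕ} {φ : M → G} :
    φ ∈ polyMapDegreeLT M G (n + 1) ↔ ∀ h, Δ_[h] φ ∈ polyMapDegreeLT M G n := by
  simp only [polyMapDegreeLT, Submodule.mem_iInf, Submodule.mem_comap, coe_fwdDiffₗ]

lemma polyMapDegreeLT_mono : Monotone (polyMapDegreeLT M G) := by
  refine monotone_nat_of_le_succ fun n => ?_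
  induction n with
  | zero => exact bot_le (a := polyMapDegreeLT M G 1)
  | succ n ih =>
    intro φ hφ
    rw [mem_polyMapDegreeLT_succ] at hφ ⊢
    exact fun h => ih (hφ h)

lemma smul_mem_polyMapDegreeLT {R : Type*} [Monoid R] [DistribMulAction R G] (c : R) {n : ℕ}
    {φ : M → G} (hφ : φ ∈ polyMapDegreeLT M G n) : c • φ ∈ polyMapDegreeLT M G n := by
  induction n generalizing φ with
  | zero => simp_all [mem_polyMapDegreeLT_zero]
  | succ n ih =>
    rw [mem_polyMapDegreeLT_succ] at hφ ⊢
    exact fun h => by simpa only [fwdDiff_const_smul] using ih (hφ h)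

lemma fwdDiff_iter_eq_zero_of_mem_polyMapDegreeLT {n : ℕ} {φ : M → G}
    (hφ : φ ∈ polyMapDegreeLT M G n) (h : M) : Δ_[h] ^[n] φ = 0 := by
  induction n generalizing φ with
  | zero => exact mem_polyMapDegreeLT_zero.1 hφ
  | succ n ih => exact ih (mem_polyMapDegreeLT_succ.1 hφ h)

lemma sum_powerset_neg_one_pow_smul_eq_zero_of_mem_polyMapDegreeLT {ι : Type*} [DecidableEq ι]
    (s : Finset ι) (x : ι → M) {φ : M → G} (hφ : φ ∈ polyMapDegreeLT M G #s) :
    ∑ S ∈ s.powerset, (-1 : ℤ) ^ (#s - #S) • φ (∑ i ∈ S, x i) = 0 := by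
  induction s using Finset.induction_on generalizing φ with
  | empty => simp [mem_polyMapDegreeLT_zero.1 hφ]
  | insert a t ha ih =>
    rw [card_insert_of_notMem ha] at hφ ⊢
    rw [sum_powerset_insert ha, ← sum_add_distrib,
      ← ih (mem_polyMapDegreeLT_succ.1 hφ (x a))]
    refine sum_congr rfl fun S hS => ?_
    have hSt : S ⊆ t := mem_powerset.1 hS
    have hsign : #t + 1 - #S = (#t - #S) + 1 := by
      have := card_le_card hSt
      omega
    rw [sum_insert fun haS => ha (hSt haS), card_insert_of_notMem fun haS => ha (hSt haS),
      hsign, Nat.add_sub_add_right, pow_succ, mul_neg_one, neg_smul, fwdDiff, smul_sub,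
      add_comm (x a)]
    abel

end PolyMap

lemma sum_ringChoose_add_one_smul {R G : Type*} [CommRing R] [BinomialRing R] [AddCommGroup G]
    [Module R G] (a : ℕ → G) (r : R) (n : ℕ) :
    ∑ k ∈ range (n + 1), Ring.choose (r + 1) k • a k =
      ∑ k ∈ range (n + 1), Ring.choose r k • a k + ∑ k ∈ range n, Ring.choose r k • a (k + 1) := by
  simp only [sum_range_succ' _ n, Ring.choose_succ_succ, add_smul, sum_add_distrib,
    Ring.choose_zero_right]
  abel

theorem add_zsmul_eq_sum_ringChoose_smul_fwdDiff_iter {M G : Type*} [AddCommGroup M]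
    [AddCommGroup G] {n : ℕ} {f : M → G} {h : M} (hf : Δ_[h] ^[n] f = 0) (y : M) (r : ℤ) :
    f (y + r • h) = ∑ k ∈ range n, Ring.choose r k • Δ_[h] ^[k] f y := by
  induction n generalizing f r with
  | zero => simpa using congr_fun hf (y + r • h)
  | succ n ih =>
    have hΔ (r : ℤ) :
        Δ_[h] f (y + r • h) = ∑ k ∈ range n, Ring.choose r k • Δ_[h] ^[k + 1] f y := by
      simp only [ih hf r, Function.iterate_succ_apply]
    let g (r : ℤ) : G := f (y + r • h) - ∑ k ∈ range (n + 1), Ring.choose r k • Δ_[h] ^[k] f y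
    have hg : Function.Periodic g 1 := fun r => by
      simp only [g, sum_ringChoose_add_one_smul, ← hΔ, fwdDiff, add_smul, one_smul, ← add_assoc]
      abel
    have hg0 : g 0 = 0 := by simp [g, sum_range_succ']
    simpa [g, hg0, sub_eq_zero] using hg.int_mul_eq r

lemma delta_eq_fwdDiff_iter_s14 {M N : Type*} [AddCommMonoid M] [AddCommGroup N] (φ : M → N) (k : ℕ)
    (x : M) : delta φ k x = Δ_[x] ^[k] φ 0 := by
  simp [fwdDiff_iter_eq_sum_shift, delta]

section BinomialRing

variable {R : Type*} [CommRing R] [BinomialRing R]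

lemma fwdDiff_ringChoose (h : R) (k : ℕ) :
    Δ_[h] (fun t => Ring.choose t k) =
      ∑ i ∈ range k, Ring.choose h (k - i) • fun t => Ring.choose t i := by
  funext t
  rw [fwdDiff, Ring.add_choose_eq k (Commute.all t h), Nat.sum_antidiagonal_eq_sum_range_succ_mk,
    sum_range_succ]
  simp [mul_comm]

lemma ringChoose_mem_polyMapDegreeLT (k : ℕ) :
    (fun t : R => Ring.choose t k) ∈ polyMapDegreeLT R R (k + 1) := by
  induction k using Nat.strong_induction_on with
  | _ k ih =>
    refine mem_polyMapDegreeLT_succ.2 fun h => ?_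
    rw [fwdDiff_ringChoose]
    refine Submodule.sum_mem _ fun i hi => smul_mem_polyMapDegreeLT _ ?_
    have hik : i < k := mem_range.1 hi
    exact polyMapDegreeLT_mono hik (ih i hik)

end BinomialRing

/-- **Numerical maps ℤ → ℤ are precisely the numerical polynomials:**
`φ : ℤ → ℤ` is numerical of degree ≤ n iff `φ(x) = ∑_{k=0}^{n} c_k (x choose k)`
for some integers `c_0, …, c_n`. -/
theorem isNumerical_int_iff_numerical_polynomial (n : ℕ) (φ : ℤ → ℤ) :
    IsNumerical ℤ φ n ↔
      ∃ c : Fin (n + 1) → ℤ,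
        ∀ x : ℤ, φ x = ∑ k : Fin (n + 1), c k * Ring.choose x (k : ℕ) := by
  constructor
  · rintro ⟨-, hexpand⟩
    refine ⟨fun k => delta φ k 1, fun x => ?_⟩
    simpa [Fin.sum_univ_eq_sum_range (fun k => delta φ k 1 * Ring.choose x k), mul_comm]
      using hexpand x 1
  · rintro ⟨c, hc⟩
    have hφ : φ ∈ polyMapDegreeLT ℤ ℤ (n + 1) := by
      rw [show φ = ∑ k : Fin (n + 1), c k • fun t => Ring.choose t k by ext; simp [hc]]
      refine Submodule.sum_mem _ fun k _ => Submodule.smul_mem _ _ ?_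
      exact polyMapDegreeLT_mono (by omega) (ringChoose_mem_polyMapDegreeLT k)
    refine ⟨fun x => ?_, fun r x => ?_⟩
    · have := sum_powerset_neg_one_pow_smul_eq_zero_of_mem_polyMapDegreeLT univ x
        (by rwa [card_fin])
      rwa [powerset_univ, card_fin] at this
    · simpa [delta_eq_fwdDiff_iter_s14] using
        add_zsmul_eq_sum_ringChoose_smul_fwdDiff_iter
          (fwdDiff_iter_eq_zero_of_mem_polyMapDegreeLT hφ x) 0 r
end

section
/- Let B be a binomial ring, M, N B-modules, and φ : M → N a map. Suppose φ admits polynomial (monomial) expansions of degree ≤ n: for every k ∈ ℕ and every u : Fin k → M there exists a family w : (Fin k → ℕ) → N with w q = 0 whenever |q| > n, such that φ(∑_i (a i) • (u i)) = ∑_{q, |q| ≤ n} (∏_i (a i)^{q i}) • w q for all a : Fin k → B. Then φ is numerical of degree ≤ n. (Every strict polynomial map of degree ≤ n is numerical of degree ≤ n.) -/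
/-! Plugging the indicator vector of `S` into the expansion of `φ (∑ i, a i • x i)` makes the
`(n + 1)`-st cross effect a combination of the alternating sums `∑_{S ⊇ supp q} ± 1`; these vanish
because a multi-index of weight `≤ n` misses one of the `n + 1` coordinates.

On a line, `a ↦ φ (a • x)` is a polynomial of degree `≤ n` with coefficients in `N`, so it suffices
to expand `r ^ m` in terms of the `Ring.choose r k`. That is Newton's forward-difference interpolation
`P r = ∑ k, Δ^k P 0 • Ring.choose r k` for `P : ℤ[X]`; multiplied by `n !` it becomes an identity
between integer polynomials of degree `≤ n`, checked at `0, …, n` by the Gregory–Newton formula,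
and `n !` can be cancelled because binomial rings are torsion free. -/

open Finset Polynomial

theorem Finset.sum_superset_neg_one_pow_card_compl {ι : Type*} [Fintype ι] [DecidableEq ι]
    {T : Finset ι} (hT : T ≠ univ) :
    ∑ S with T ⊆ S, (-1 : ℤ) ^ (Fintype.card ι - #S) = 0 := by
  rw [← sum_powerset_neg_one_pow_card_of_nonempty
    (by rwa [nonempty_iff_ne_empty, Ne, compl_eq_empty_iff] : Tᶜ.Nonempty)]
  refine sum_nbij' compl compl (fun S hS => ?_) (fun U hU => ?_) (fun S _ => compl_compl S)
    (fun U _ => compl_compl U) (fun S _ => by rw [card_compl])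
  · simpa using (mem_filter.1 hS).2
  · simpa [subset_compl_comm] using hU

theorem Finset.prod_ite_mem_pow {ι R : Type*} [Fintype ι] [DecidableEq ι] [CommMonoidWithZero R]
    (S : Finset ι) (q : ι → ℕ) :
    ∏ i, (if i ∈ S then (1 : R) else 0) ^ q i = if ({i | q i ≠ 0} : Finset ι) ⊆ S then 1 else 0 := by
  have h (i : ι) : (if i ∈ S then (1 : R) else 0) ^ q i = if q i = 0 ∨ i ∈ S then 1 else 0 := by
    by_cases hi : i ∈ S <;> by_cases hq : q i = 0 <;> simp [hi, hq]
  simp only [h, Fintype.prod_boole, subset_iff, mem_filter_univ, or_iff_not_imp_left]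

theorem sum_neg_one_pow_smul_apply_sum_eq_zero {ι B M N : Type*} [Fintype ι] [DecidableEq ι]
    [CommSemiring B] [AddCommMonoid M] [Module B M] [AddCommGroup N] [Module B N]
    {φ : M → N} {x : ι → M} {s : Finset (ι → ℕ)} {w : (ι → ℕ) → N}
    (hs : ∀ q ∈ s, ∑ i, q i < Fintype.card ι)
    (hφ : ∀ a : ι → B, φ (∑ i, a i • x i) = ∑ q ∈ s, (∏ i, a i ^ q i) • w q) :
    ∑ S : Finset ι, ((-1 : ℤ) ^ (Fintype.card ι - #S)) • φ (∑ i ∈ S, x i) = 0 := by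
  have h_indicator (S : Finset ι) :
      φ (∑ i ∈ S, x i) = ∑ q ∈ s, if ({i | q i ≠ 0} : Finset ι) ⊆ S then w q else 0 := by
    simpa only [ite_smul, one_smul, zero_smul, sum_ite_mem, univ_inter, prod_ite_mem_pow] using
      hφ fun i => if i ∈ S then 1 else 0
  simp only [h_indicator, smul_sum, smul_ite, smul_zero]
  rw [sum_comm]
  refine sum_eq_zero fun q hq => ?_
  obtain ⟨i, -, hi⟩ := exists_lt_of_sum_lt (by simpa using hs q hq : ∑ i, q i < ∑ _i : ι, 1)
  rw [← sum_filter, ← sum_smul, sum_superset_neg_one_pow_card_compl, zero_smul]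
  exact (ne_of_mem_of_not_mem' (mem_univ i) (by simpa using hi)).symm

section Newton

open scoped Nat

theorem shift_eq_sum_range_fwdDiff_iter_of_le {M G : Type*} [AddCommMonoid M] [AddCommGroup G]
    (h : M) (f : M → G) (y : M) {j n : ℕ} (hjn : j ≤ n) :
    f (y + j • h) = ∑ k ∈ range (n + 1), j.choose k • (fwdDiff h)^[k] f y := by
  rw [shift_eq_sum_fwdDiff_iter h f j y]
  refine sum_subset (range_subset_range.2 (by omega)) fun k _ hk => ?_
  rw [Nat.choose_eq_zero_of_lt (by simpa using hk), zero_smul]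

theorem Polynomial.factorial_smul_eq_sum_fwdDiff_iter_smul_descPochhammer {P : ℤ[X]} {n : ℕ}
    (hP : P.natDegree ≤ n) :
    n ! • P = ∑ k ∈ range (n + 1),
      ((n ! / k ! : ℕ) * (fwdDiff 1)^[k] P.eval 0) • descPochhammer ℤ k := by
  refine eq_of_natDegree_lt_card_of_eval_eq _ _ (f := fun i : Fin (n + 1) => ((i : ℕ) : ℤ))
    (fun i j hij => Fin.ext (by simpa using hij)) (fun i => ?_) ?_
  · have newton := shift_eq_sum_range_fwdDiff_iter_of_le (1 : ℤ) P.eval 0 (Fin.is_le i)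
    rw [zero_add, nsmul_one] at newton
    rw [eval_smul, eval_finsetSum, newton, smul_sum]
    refine sum_congr rfl fun k hk => ?_
    have hkn : ((n ! / k ! : ℕ) : ℤ) * k ! = n ! := by
      rw [← Nat.cast_mul,
        Nat.div_mul_cancel (Nat.factorial_dvd_factorial (mem_range_succ_iff.1 hk))]
    rw [eval_smul, descPochhammer_eval_eq_descFactorial, Nat.descFactorial_eq_factorial_mul_choose,
      smul_eq_mul, nsmul_eq_mul, nsmul_eq_mul, Nat.cast_mul, ← hkn]
    ring
  · rw [Fintype.card_fin, max_lt_iff, Nat.lt_succ_iff, Nat.lt_succ_iff]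
    refine ⟨(natDegree_smul_le _ _).trans hP, natDegree_sum_le_of_forall_le _ _ fun k hk => ?_⟩
    exact (natDegree_smul_le _ _).trans
      ((descPochhammer_natDegree ℤ k).trans_le (mem_range_succ_iff.1 hk))

theorem Polynomial.smeval_eq_sum_fwdDiff_iter_smul_choose {B : Type*} [CommRing B] [BinomialRing B]
    {P : ℤ[X]} {n : ℕ} (hP : P.natDegree ≤ n) (r : B) :
    P.smeval r = ∑ k ∈ range (n + 1), (fwdDiff 1)^[k] P.eval 0 • Ring.choose r k := by
  have := BinomialRing.toIsAddTorsionFree (R := B)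
  apply nsmul_right_injective (Nat.factorial_ne_zero n)
  have key := congrArg (smeval.linearMap ℤ r)
    (factorial_smul_eq_sum_fwdDiff_iter_smul_descPochhammer hP)
  simp only [map_nsmul, map_sum, map_zsmul, smeval.linearMap_apply,
    Ring.descPochhammer_eq_factorial_smul_choose] at key
  simp only [key, smul_sum]
  refine sum_congr rfl fun k hk => ?_
  have hkn : (n ! : B) = (n ! / k ! : ℕ) * k ! := by
    rw [← Nat.cast_mul,
      Nat.div_mul_cancel (Nat.factorial_dvd_factorial (mem_range_succ_iff.1 hk))]
  simp only [zsmul_eq_mul, nsmul_eq_mul, Int.cast_mul, Int.cast_natCast, hkn]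
  ring

end Newton

section Numerical

variable {B M N : Type*} [CommRing B] [AddCommMonoid M] [Module B M] [AddCommGroup N] [Module B N]

theorem delta_eq_sum_fwdDiff_iter_pow_smul
    {φ : M → N} {x : M} {n : ℕ} {w : ℕ → N}
    (hφ : ∀ a : B, φ (a • x) = ∑ m ∈ range (n + 1), a ^ m • w m) (k : ℕ) :
    delta φ k x = ∑ m ∈ range (n + 1), (fwdDiff 1)^[k] (fun z : ℤ => z ^ m) 0 • w m := by
  simp only [fwdDiff_iter_eq_sum_shift, zero_add, nsmul_one, sum_smul]
  rw [delta, sum_comm]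
  refine sum_congr rfl fun j _ => ?_
  rw [← Nat.cast_smul_eq_nsmul B, hφ, smul_sum]
  refine sum_congr rfl fun m _ => ?_
  have hcast : ((j : ℤ) ^ m) • w m = ((j : B) ^ m) • w m := by
    rw [← Int.cast_smul_eq_zsmul B]
    push_cast
    rfl
  simp only [smul_eq_mul, mul_smul, hcast]

theorem apply_smul_eq_sum_choose_smul_delta [BinomialRing B]
    {φ : M → N} {x : M} {n : ℕ} {w : ℕ → N}
    (hφ : ∀ a : B, φ (a • x) = ∑ m ∈ range (n + 1), a ^ m • w m) (r : B) :
    φ (r • x) = ∑ k ∈ range (n + 1), Ring.choose r k • delta φ k x := by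
  simp only [delta_eq_sum_fwdDiff_iter_pow_smul hφ, smul_sum, hφ]
  rw [sum_comm]
  refine sum_congr rfl fun m hm => ?_
  have newton := (X ^ m : ℤ[X]).smeval_eq_sum_fwdDiff_iter_smul_choose
    ((natDegree_X_pow_le m).trans (mem_range_succ_iff.1 hm)) r
  simp only [smeval_X_pow, eval_X_pow] at newton
  rw [newton, sum_smul]
  refine sum_congr rfl fun k _ => ?_
  rw [smul_comm, ← smul_assoc]

end Numerical

theorem sum_multiIdx_one {N : Type*} [AddCommMonoid N] (n : ℕ) (f : (Fin 1 → ℕ) → N) :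
    ∑ q ∈ multiIdx 1 n, f q = ∑ m ∈ range (n + 1), f fun _ => m := by
  have hconst (q : Fin 1 → ℕ) : (fun _ => q 0) = q := funext fun i => by rw [Subsingleton.elim i 0]
  refine sum_nbij' (fun q => q 0) (fun m _ => m) (fun q hq => ?_) (fun m hm => ?_)
    (fun q _ => hconst q) (fun m _ => rfl) (fun q _ => by rw [hconst])
  · simpa [Nat.lt_succ_iff] using (mem_filter.1 hq).2
  · simpa [multiIdx, Nat.lt_succ_iff, Pi.le_def] using hm

/-- **Every strict polynomial map of degree ≤ n is numerical of degree ≤ n:** a map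
admitting monomial expansions of degree ≤ n is numerical of degree ≤ n. -/
theorem strict_polynomial_is_numerical {B M N : Type*} [CommRing B] [BinomialRing B]
    [AddCommGroup M] [Module B M] [AddCommGroup N] [Module B N]
    (n : ℕ) (φ : M → N)
    (h : ∀ (k : ℕ) (u : Fin k → M),
      ∃ w : (Fin k → ℕ) → N,
        (∀ q : Fin k → ℕ, n < ∑ i, q i → w q = 0) ∧
        ∀ a : Fin k → B,
          φ (∑ i, a i • u i) =
            ∑ q ∈ multiIdx k n, (∏ i, (a i) ^ (q i)) • w q) :
    IsNumerical B φ n := by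
  refine ⟨fun x => ?_, fun r x => ?_⟩
  · obtain ⟨w, -, hw⟩ := h (n + 1) x
    have hdeg (q) (hq : q ∈ multiIdx (n + 1) n) : ∑ i, q i < Fintype.card (Fin (n + 1)) := by
      simpa [Nat.lt_succ_iff] using (mem_filter.1 hq).2
    simpa using sum_neg_one_pow_smul_apply_sum_eq_zero hdeg hw
  · obtain ⟨w, -, hw⟩ := h 1 fun _ => x
    refine apply_smul_eq_sum_choose_smul_delta (w := fun m => w fun _ => m) (fun a => ?_) r
    simpa [sum_multiIdx_one] using hw fun _ => a
end
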